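/- Let k ≥ 3 be an integer and L : ℕ → ℕ a function with L(n) ≤ n for all n. Then Σ₁(L(n),k) = 2^{−n} · ∑_{m ≤ n, |m − n/2| < n^{1−4/(3k)}} C(n,m) · (1 + ω_{n,m,k}/C(n,k))^{L(n)} tends to 1 as n → ∞. -/

import Mathlib

/-!
`ω_{n,m,k}` is the coefficient of `X^k` in `(1 - X)^m (1 + X)^(n-m)`, which factors as
`(1 - X²)^min(m, n-m) · (1 ∓ X)^|n - 2m|`. For `c ≥ max(√n, |n - 2m|)` the `i`-th coefficients of
both factors are at most `c^i` in absolute value, so `|ω_{n,m,k}| ≤ (k + 1) c^k`. In the window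
`|m - n/2| < n^(1-δ)` with `δ < 1/2` one may take `c = 2 n^(1-δ)`, and `C(n,k) ≥ (n/2)^k / k!` then
gives `|ω_{n,m,k} / C(n,k)| = O(n^(-δk))`. For `δ = 4/(3k)` this is `O(n^(-4/3))`, so every factor
`(1 + ω/C(n,k))^L(n)` with `L(n) ≤ n` lies between `1 - O(n^(-1/3))` and `exp O(n^(-1/3))`.
Finally, by Chebyshev's inequality for the binomial distribution (variance `n/4`), the window
carries binomial mass `1 - O(n^(2δ-1))`, which tends to `1` because `k ≥ 3` makes `δ < 1/2`.
-/

open Finset Filter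

attribute [local instance] Classical.propDecidable

/-- `ω_{n,m,k} = ∑_{s=0}^{k} (−1)^s C(m,s) C(n−m,k−s)`. -/
def omegaW (n m k : ℕ) : ℤ :=
  ∑ s ∈ Finset.range (k + 1), (-1 : ℤ) ^ s * (m.choose s : ℤ) * ((n - m).choose (k - s) : ℤ)

open Polynomial
open scoped Nat Topology

lemma coeff_one_sub_X_pow (m s : ℕ) :
    ((1 - X : ℤ[X]) ^ m).coeff s = (-1) ^ s * m.choose s := by
  induction m generalizing s with
  | zero => cases s <;> simp [coeff_one]
  | succ m ih =>
    rw [pow_succ, mul_sub, mul_one, coeff_sub]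
    cases s with
    | zero => simp [ih]
    | succ s => rw [coeff_mul_X, ih, ih, Nat.choose_succ_succ']; push_cast; ring

lemma omegaW_eq_coeff (n m k : ℕ) :
    omegaW n m k = ((1 - X : ℤ[X]) ^ m * (1 + X) ^ (n - m)).coeff k := by
  rw [coeff_mul, Nat.sum_antidiagonal_eq_sum_range_succ_mk]
  refine sum_congr rfl fun s _ => ?_
  rw [coeff_one_sub_X_pow, coeff_one_add_X_pow]

lemma abs_coeff_mul_le {p q : ℤ[X]} {c : ℝ} (hp : ∀ i, |(p.coeff i : ℝ)| ≤ c ^ i)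
    (hq : ∀ i, |(q.coeff i : ℝ)| ≤ c ^ i) (k : ℕ) :
    |((p * q).coeff k : ℝ)| ≤ (k + 1) * c ^ k := by
  rw [coeff_mul, Int.cast_sum]
  calc |∑ x ∈ antidiagonal k, ((p.coeff x.1 * q.coeff x.2 : ℤ) : ℝ)|
      ≤ ∑ _x ∈ antidiagonal k, c ^ k := by
        refine (abs_sum_le_sum_abs _ _).trans (sum_le_sum fun x hx => ?_)
        rw [Int.cast_mul, abs_mul, ← mem_antidiagonal.mp hx, pow_add]
        exact mul_le_mul (hp _) (hq _) (abs_nonneg _) ((abs_nonneg _).trans (hp _))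
    _ = (k + 1) * c ^ k := by simp

lemma cast_choose_le_pow_of_le {t : ℕ} {c : ℝ} (ht : (t : ℝ) ≤ c) (i : ℕ) :
    (t.choose i : ℝ) ≤ c ^ i :=
  calc (t.choose i : ℝ) ≤ (t : ℝ) ^ i := mod_cast t.choose_le_pow i
    _ ≤ c ^ i := pow_le_pow_left₀ t.cast_nonneg ht i

lemma abs_coeff_one_add_X_pow_le {t : ℕ} {c : ℝ} (ht : (t : ℝ) ≤ c) (i : ℕ) :
    |(((1 + X : ℤ[X]) ^ t).coeff i : ℝ)| ≤ c ^ i := by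
  rw [coeff_one_add_X_pow, Int.cast_natCast, Nat.abs_cast]
  exact cast_choose_le_pow_of_le ht i

lemma abs_coeff_one_sub_X_pow_le {t : ℕ} {c : ℝ} (ht : (t : ℝ) ≤ c) (i : ℕ) :
    |(((1 - X : ℤ[X]) ^ t).coeff i : ℝ)| ≤ c ^ i := by
  rw [coeff_one_sub_X_pow]
  push_cast
  rw [abs_mul, abs_pow, abs_neg, abs_one, one_pow, one_mul, Nat.abs_cast]
  exact cast_choose_le_pow_of_le ht i

lemma abs_coeff_one_sub_X_sq_pow_le {a : ℕ} {c : ℝ} (hc : 0 ≤ c) (ha : (a : ℝ) ≤ c ^ 2)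
    (i : ℕ) : |(((1 - X ^ 2 : ℤ[X]) ^ a).coeff i : ℝ)| ≤ c ^ i := by
  have hexpand : (1 - X ^ 2 : ℤ[X]) ^ a = expand ℤ 2 ((1 - X) ^ a) := by simp
  rw [hexpand, coeff_expand two_pos]
  split_ifs with h
  · obtain ⟨j, rfl⟩ := h
    rw [Nat.mul_div_cancel_left j two_pos, pow_mul]
    exact abs_coeff_one_sub_X_pow_le ha j
  · simpa using pow_nonneg hc i

lemma abs_omegaW_le {n m k : ℕ} {c : ℝ} (hm : m ≤ n) (hc : 0 ≤ c) (hn : (n : ℝ) ≤ c ^ 2)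
    (hmc : |2 * (m : ℝ) - n| ≤ c) : |(omegaW n m k : ℝ)| ≤ (k + 1) * c ^ k := by
  obtain ⟨j, rfl⟩ := Nat.exists_eq_add_of_le hm
  rw [omegaW_eq_coeff, Nat.add_sub_cancel_left]
  rcases le_total m j with h | h
  · obtain ⟨t, rfl⟩ := Nat.exists_eq_add_of_le h
    have hfactor : (1 - X : ℤ[X]) ^ m * (1 + X) ^ (m + t) = (1 - X ^ 2) ^ m * (1 + X) ^ t := by
      rw [pow_add, ← mul_assoc, ← mul_pow]; ring
    rw [hfactor]
    push_cast at hn hmc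
    refine abs_coeff_mul_le (abs_coeff_one_sub_X_sq_pow_le hc (by linarith))
      (abs_coeff_one_add_X_pow_le ?_) k
    rwa [show 2 * (m : ℝ) - (m + (m + t)) = -t by ring, abs_neg, Nat.abs_cast] at hmc
  · obtain ⟨t, rfl⟩ := Nat.exists_eq_add_of_le h
    have hfactor : (1 - X : ℤ[X]) ^ (j + t) * (1 + X) ^ j = (1 - X ^ 2) ^ j * (1 - X) ^ t := by
      rw [pow_add, mul_right_comm, ← mul_pow]; ring
    rw [hfactor]
    push_cast at hn hmc
    refine abs_coeff_mul_le (abs_coeff_one_sub_X_sq_pow_le hc (by linarith))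
      (abs_coeff_one_sub_X_pow_le ?_) k
    rwa [show 2 * ((j : ℝ) + t) - (j + t + j) = t by ring, Nat.abs_cast] at hmc

lemma abs_omegaW_div_choose_le {n m k : ℕ} {c : ℝ} (hkn : 2 * k ≤ n) (hm : m ≤ n) (hc : 0 ≤ c)
    (hn : (n : ℝ) ≤ c ^ 2) (hmc : |2 * (m : ℝ) - n| ≤ c) :
    |(omegaW n m k : ℝ) / n.choose k| ≤ (k + 1) * k ! * (2 * c / n) ^ k := by
  obtain rfl | hk0 := k.eq_zero_or_pos
  · simp [omegaW]
  have hn0 : (0 : ℝ) < n := by norm_cast; omega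
  have hchoose : (n / 2 : ℝ) ^ k / k ! ≤ n.choose k := by
    refine le_trans ?_ (Nat.pow_le_choose k n)
    gcongr
    rw [Nat.cast_sub (by omega)]
    have : (2 * k : ℝ) ≤ n := mod_cast hkn
    push_cast
    linarith
  have hcn : 2 * c / n * (n / 2) = c := by field_simp
  rw [abs_div, Nat.abs_cast, div_le_iff₀ (mod_cast Nat.choose_pos (by omega))]
  calc |(omegaW n m k : ℝ)| ≤ (k + 1) * c ^ k := abs_omegaW_le hm hc hn hmc
    _ = (k + 1) * k ! * (2 * c / n) ^ k * ((n / 2 : ℝ) ^ k / k !) := by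
        rw [← hcn, mul_pow]
        field_simp
    _ ≤ (k + 1) * k ! * (2 * c / n) ^ k * n.choose k := by gcongr

lemma one_add_pow_mem_Icc {x ε : ℝ} {L n : ℕ} (hx : |x| ≤ ε) (hε : ε ≤ 1) (hL : L ≤ n) :
    (1 + x) ^ L ∈ Set.Icc (1 - n * ε) (Real.exp (n * ε)) := by
  obtain ⟨hxl, hxu⟩ := abs_le.mp hx
  have hε0 : 0 ≤ ε := (abs_nonneg x).trans hx
  have hLn : (L : ℝ) ≤ n := mod_cast hL
  have hL0 : (0 : ℝ) ≤ L := L.cast_nonneg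
  constructor
  · calc 1 - n * ε ≤ 1 + L * x := by nlinarith
      _ ≤ (1 + x) ^ L := one_add_mul_le_pow (by linarith) L
  · calc (1 + x) ^ L ≤ Real.exp x ^ L :=
          pow_le_pow_left₀ (by linarith) (by linarith [Real.add_one_le_exp x]) L
      _ = Real.exp (L * x) := (Real.exp_nat_mul x L).symm
      _ ≤ Real.exp (n * ε) := Real.exp_le_exp.mpr (by nlinarith)

theorem tendsto_sum_mul_one_add_pow {ι : Type*} {S : ℕ → Finset ι} {w x : ℕ → ι → ℝ}
    {ε : ℕ → ℝ} {L : ℕ → ℕ} (hL : ∀ n, L n ≤ n) (hw : ∀ n, ∀ i ∈ S n, 0 ≤ w n i)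
    (hw1 : Tendsto (fun n => ∑ i ∈ S n, w n i) atTop (𝓝 1))
    (hx : ∀ᶠ n in atTop, ∀ i ∈ S n, |x n i| ≤ ε n)
    (hε : Tendsto (fun n => n * ε n) atTop (𝓝 0)) :
    Tendsto (fun n => ∑ i ∈ S n, w n i * (1 + x n i) ^ L n) atTop (𝓝 1) := by
  have hε1 : ∀ᶠ n in atTop, ε n ≤ 1 := by
    filter_upwards [hε.eventually_lt_const one_pos, eventually_ge_atTop 1] with n hnε hn
    have : (1 : ℝ) ≤ n := mod_cast hn
    rcases le_or_gt (ε n) 0 with h | h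
    · linarith
    · nlinarith
  have hlo : Tendsto (fun n => (1 - n * ε n) * ∑ i ∈ S n, w n i) atTop (𝓝 1) := by
    simpa using (tendsto_const_nhds.sub hε).mul hw1
  have hhi : Tendsto (fun n => Real.exp (n * ε n) * ∑ i ∈ S n, w n i) atTop (𝓝 1) := by
    simpa using ((Real.continuous_exp.tendsto 0).comp hε).mul hw1
  refine tendsto_of_tendsto_of_tendsto_of_le_of_le' hlo hhi ?_ ?_
  all_goals
    filter_upwards [hx, hε1] with n hxn hεn
    rw [mul_sum]
    refine sum_le_sum fun i hi => ?_
    have hpow := one_add_pow_mem_Icc (hxn i hi) hεn (hL n)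
  · rw [mul_comm]
    exact mul_le_mul_of_nonneg_left hpow.1 (hw n i hi)
  · rw [mul_comm (Real.exp _)]
    exact mul_le_mul_of_nonneg_left hpow.2 (hw n i hi)

noncomputable def centralWindow (n : ℕ) (B : ℝ) : Finset ℕ :=
  (range (n + 1)).filter fun m : ℕ => |(m : ℝ) - n / 2| < B

lemma sum_choose_mul_two_mul_sub_sq (n : ℕ) :
    ∑ m ∈ range (n + 1), (n.choose m : ℝ) * (2 * m - n) ^ 2 = (n : ℝ) * 2 ^ n := by
  induction n with
  | zero => simp
  | succ n ih =>
    have hsum : ∑ m ∈ range (n + 1), (n.choose m : ℝ) = 2 ^ n := mod_cast n.sum_range_choose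
    have hpascal := sum_choose_succ_mul (R := ℝ) (fun i _ => (2 * (i : ℝ) - (n + 1 : ℕ)) ^ 2) n
    rw [hpascal, ← sum_add_distrib]
    have hterm : ∀ i ∈ range (n + 1),
        (n.choose i : ℝ) * (2 * i - (n + 1 : ℕ)) ^ 2
          + n.choose i * (2 * (i + 1 : ℕ) - (n + 1 : ℕ)) ^ 2
        = 2 * ((n.choose i : ℝ) * (2 * i - n) ^ 2) + 2 * n.choose i := fun i _ => by
      push_cast; ring
    rw [sum_congr rfl hterm, sum_add_distrib, ← mul_sum, ← mul_sum, ih, hsum]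
    push_cast
    ring

lemma sum_choose_filter_not_lt_le (n : ℕ) {B : ℝ} (hB : 0 < B) :
    ∑ m ∈ (range (n + 1)).filter (fun m : ℕ => ¬ |(m : ℝ) - n / 2| < B), (n.choose m : ℝ)
      ≤ (n : ℝ) * 2 ^ n / (4 * B ^ 2) := by
  rw [le_div_iff₀ (by positivity), sum_mul]
  calc ∑ m ∈ (range (n + 1)).filter (fun m : ℕ => ¬ |(m : ℝ) - n / 2| < B),
        (n.choose m : ℝ) * (4 * B ^ 2)
      ≤ ∑ m ∈ (range (n + 1)).filter (fun m : ℕ => ¬ |(m : ℝ) - n / 2| < B),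
        (n.choose m : ℝ) * (2 * m - n) ^ 2 := by
        refine sum_le_sum fun m hm => ?_
        have hBm : B ≤ |(m : ℝ) - n / 2| := not_lt.mp (mem_filter.mp hm).2
        have hsq : B ^ 2 ≤ ((m : ℝ) - n / 2) ^ 2 := by
          simpa only [sq_abs] using pow_le_pow_left₀ hB.le hBm 2
        gcongr
        linarith
    _ ≤ ∑ m ∈ range (n + 1), (n.choose m : ℝ) * (2 * m - n) ^ 2 :=
        sum_le_sum_of_subset_of_nonneg (filter_subset _ _) fun _ _ _ => by positivity
    _ = (n : ℝ) * 2 ^ n := sum_choose_mul_two_mul_sub_sq n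

lemma tendsto_sum_choose_centralWindow {B : ℕ → ℝ} (hB : ∀ᶠ n in atTop, 0 < B n)
    (hnB : Tendsto (fun n : ℕ => (n : ℝ) / B n ^ 2) atTop (𝓝 0)) :
    Tendsto (fun n : ℕ => ∑ m ∈ centralWindow n (B n), (n.choose m : ℝ) / 2 ^ n) atTop (𝓝 1) := by
  set tail := fun n : ℕ =>
    ∑ m ∈ (range (n + 1)).filter (fun m : ℕ => ¬ |(m : ℝ) - n / 2| < B n), (n.choose m : ℝ) / 2 ^ n
  have htail : Tendsto tail atTop (𝓝 0) := by
    refine squeeze_zero' (Eventually.of_forall fun n => sum_nonneg fun _ _ => by positivity) ?_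
      (by simpa using hnB.div_const 4)
    filter_upwards [hB] with n hBn
    calc tail n ≤ (n : ℝ) * 2 ^ n / (4 * B n ^ 2) / 2 ^ n := by
          simp only [tail, ← sum_div]
          gcongr
          exact sum_choose_filter_not_lt_le n hBn
      _ = (n : ℝ) / B n ^ 2 / 4 := by field_simp
  have hsplit : ∀ n, ∑ m ∈ centralWindow n (B n), (n.choose m : ℝ) / 2 ^ n = 1 - tail n := by
    intro n
    rw [eq_sub_iff_add_eq, centralWindow, sum_filter_add_sum_filter_not, ← sum_div,
      div_eq_one_iff_eq (by positivity)]
    exact_mod_cast n.sum_range_choose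
  simpa [hsplit] using tendsto_const_nhds.sub htail

lemma tendsto_natCast_rpow_of_neg {r : ℝ} (hr : r < 0) :
    Tendsto (fun n : ℕ => (n : ℝ) ^ r) atTop (𝓝 0) := by
  simpa [Function.comp_def] using
    (tendsto_rpow_neg_atTop (neg_pos.mpr hr)).comp tendsto_natCast_atTop_atTop

lemma div_rpow_one_sub_sq {x : ℝ} (hx : 0 < x) (δ : ℝ) :
    x / (x ^ (1 - δ)) ^ 2 = x ^ (2 * δ - 1) := by
  rw [eq_comm, ← Real.rpow_mul_natCast hx.le,
    show 2 * δ - 1 = 1 - (1 - δ) * (2 : ℕ) by push_cast; ring, Real.rpow_sub hx, Real.rpow_one]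

lemma le_rpow_one_sub_sq {x δ : ℝ} (hx : 1 ≤ x) (hδ : δ ≤ 1 / 2) : x ≤ (x ^ (1 - δ)) ^ 2 :=
  calc x = x ^ (1 : ℝ) := (Real.rpow_one x).symm
    _ ≤ x ^ ((1 - δ) * (2 : ℕ)) := Real.rpow_le_rpow_of_exponent_le hx (by push_cast; linarith)
    _ = (x ^ (1 - δ)) ^ 2 := Real.rpow_mul_natCast (by linarith) _ _

lemma mul_rpow_one_sub_div_pow {x : ℝ} (hx : 0 < x) (δ : ℝ) (k : ℕ) :
    x * (x ^ (1 - δ) / x) ^ k = x ^ (1 - δ * k) := by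
  rw [show 1 - δ * k = 1 + ((1 - δ) - 1) * k by ring, Real.rpow_add hx, Real.rpow_one,
    Real.rpow_mul_natCast hx.le, Real.rpow_sub_one hx.ne']

theorem Sigma1_rpow_window_tendsto_one (k : ℕ) {δ : ℝ} (hδk : 1 < δ * k) (hδ : δ < 1 / 2)
    (L : ℕ → ℕ) (hL : ∀ n, L n ≤ n) :
    Tendsto (fun n : ℕ => (2 : ℝ) ^ (-(n : ℤ)) * ∑ m ∈ centralWindow n ((n : ℝ) ^ (1 - δ)),
      (n.choose m : ℝ) * (1 + (omegaW n m k : ℝ) / n.choose k) ^ L n) atTop (𝓝 1) := by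
  set B : ℕ → ℝ := fun n => (n : ℝ) ^ (1 - δ)
  have hwindow : Tendsto (fun n : ℕ => ∑ m ∈ centralWindow n (B n), (n.choose m : ℝ) / 2 ^ n)
      atTop (𝓝 1) := by
    refine tendsto_sum_choose_centralWindow ?_
      ((tendsto_natCast_rpow_of_neg (r := 2 * δ - 1) (by linarith)).congr' ?_)
    all_goals filter_upwards [eventually_gt_atTop 0] with n hn
    · positivity
    · exact (div_rpow_one_sub_sq (mod_cast hn) δ).symm
  have hbound : ∀ᶠ n : ℕ in atTop, ∀ m ∈ centralWindow n (B n),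
      |(omegaW n m k : ℝ) / n.choose k| ≤ (k + 1) * k ! * (2 * (2 * B n) / n) ^ k := by
    filter_upwards [eventually_ge_atTop (2 * k), eventually_gt_atTop 0] with n hkn hn m hm
    obtain ⟨hmn, hmB⟩ := mem_filter.mp hm
    have hB := le_rpow_one_sub_sq (x := n) (mod_cast hn) hδ.le
    refine abs_omegaW_div_choose_le hkn (mem_range_succ_iff.mp hmn) (by positivity)
      (by nlinarith) ?_
    rw [show 2 * (m : ℝ) - n = 2 * (m - n / 2) by ring, abs_mul, abs_two]
    linarith
  have heps : Tendsto (fun n : ℕ => n * ((k + 1) * k ! * (2 * (2 * B n) / n) ^ k))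
      atTop (𝓝 0) := by
    have := (tendsto_natCast_rpow_of_neg (r := 1 - δ * k) (by linarith)).const_mul
      ((k + 1 : ℝ) * k ! * 4 ^ k)
    rw [mul_zero] at this
    refine this.congr' ?_
    filter_upwards [eventually_gt_atTop 0] with n hn
    rw [← mul_rpow_one_sub_div_pow (mod_cast hn)]
    ring
  refine (tendsto_sum_mul_one_add_pow hL (fun n m _ => by positivity) hwindow hbound heps).congr
    fun n => ?_
  rw [zpow_neg, zpow_natCast, mul_sum]
  exact sum_congr rfl fun m _ => by ring

/-- Claim 1: if `L(n) ≤ n` then `Σ₁(L(n),k) → 1` as `n → ∞`. -/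
theorem Sigma1_tendsto_one (k : ℕ) (hk : 3 ≤ k) (L : ℕ → ℕ) (hL : ∀ n, L n ≤ n) :
    Tendsto (fun n : ℕ => (2 : ℝ) ^ (-(n : ℤ)) *
        ∑ m ∈ (Finset.range (n + 1)).filter
          (fun m : ℕ => |(m : ℝ) - n / 2| < (n : ℝ) ^ ((1 : ℝ) - 4 / (3 * k))),
          (n.choose m : ℝ) * (1 + (omegaW n m k : ℝ) / (n.choose k : ℝ)) ^ L n)
      atTop (nhds 1) := by
  have hk : (3 : ℝ) ≤ k := mod_cast hk
  have hδk : 4 / (3 * k) * k = (4 / 3 : ℝ) := by field_simp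
  exact Sigma1_rpow_window_tendsto_one k (by linarith)
    (by rw [div_lt_iff₀ (by positivity)]; linarith) L hL
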